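/- Let C be a binary singly even self-dual code of length n ≡ 2 (mod 8) with shadow S. Then every vector in S has weight ≡ 1 (mod 4). -/
import Mathlib


open Finset

variable {ι : Type*} [Fintype ι]

/-- Standard inner product over GF(2). -/
def dotp (x y : ι → ZMod 2) : ZMod 2 := ∑ i, x i * y i

/-- The dual code. -/
def dualCode (C : Submodule (ZMod 2) (ι → ZMod 2)) :
    Submodule (ZMod 2) (ι → ZMod 2) where
  carrier := {x | ∀ c ∈ C, dotp x c = 0}
  add_mem' := fun {a b} ha hb c hc => by
    simp only [dotp, Pi.add_apply, add_mul, Finset.sum_add_distrib]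
    rw [show (∑ i, a i * c i) = 0 from ha c hc, show (∑ i, b i * c i) = 0 from hb c hc, add_zero]
  zero_mem' := fun c hc => by simp [dotp]
  smul_mem' := fun r a ha c hc => by
    simp only [dotp, Pi.smul_apply, smul_eq_mul, mul_assoc, ← Finset.mul_sum]
    rw [show (∑ i, a i * c i) = 0 from ha c hc, mul_zero]

/-- Hamming weight. -/
def wt (x : ι → ZMod 2) : ℕ := (Finset.univ.filter fun i => x i ≠ 0).card

open Complex

lemma zmod2_em (a : ZMod 2) : a = 0 ∨ a = 1 := by revert a; decide

lemma mem_dualCode {C : Submodule (ZMod 2) (ι → ZMod 2)} {x : ι → ZMod 2} :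
    x ∈ dualCode C ↔ ∀ c ∈ C, dotp x c = 0 := Iff.rfl

lemma dotp_add_right (x a b : ι → ZMod 2) : dotp x (a + b) = dotp x a + dotp x b := by
  simp [dotp, mul_add, Finset.sum_add_distrib]

lemma dotp_comm (x y : ι → ZMod 2) : dotp x y = dotp y x :=
  Finset.sum_congr rfl fun i _ => mul_comm _ _

lemma dotp_self (x : ι → ZMod 2) : dotp x x = (wt x : ZMod 2) := by
  classical
  have h1 : ∀ i, x i * x i = x i := fun i => by
    rcases zmod2_em (x i) with h | h <;> simp [h]
  rw [dotp, Finset.sum_congr rfl fun i _ => h1 i, ← Finset.sum_filter_ne_zero]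
  have h2 : ∀ i ∈ univ.filter fun i => x i ≠ 0, x i = 1 := fun i hi => by
    rcases zmod2_em (x i) with h | h
    · exact absurd h (Finset.mem_filter.mp hi).2
    · exact h
  rw [Finset.sum_congr rfl h2, Finset.sum_const, wt, nsmul_eq_mul, mul_one]

lemma dotp_eq_card (x y : ι → ZMod 2) :
    dotp x y = (((univ : Finset ι).filter fun i => x i = 1 ∧ y i = 1).card : ZMod 2) := by
  classical
  rw [← Finset.sum_boole, dotp]
  refine Finset.sum_congr rfl fun i _ => ?_
  rcases zmod2_em (x i) with h | h <;> rcases zmod2_em (y i) with h' | h' <;> simp [h, h']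

lemma wt_add_card (x y : ι → ZMod 2) :
    wt x + wt y = wt (x + y) + 2 * ((univ : Finset ι).filter fun i => x i = 1 ∧ y i = 1).card := by
  classical
  have hne : ∀ a : ZMod 2, (a ≠ 0) = (a = 1) := fun a => by
    rcases zmod2_em a with h | h <;> simp [h]
  have hwx : wt x = ((univ : Finset ι).filter fun i => x i = 1).card := by
    rw [wt]; congr 1; apply Finset.filter_congr; intro i _; rw [hne]
  have hwy : wt y = ((univ : Finset ι).filter fun i => y i = 1).card := by
    rw [wt]; congr 1; apply Finset.filter_congr; intro i _; rw [hne]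
  have hadd : ∀ a b : ZMod 2, (a + b = 1) ↔ ((a = 1 ∧ ¬ b = 1) ∨ (¬ a = 1 ∧ b = 1)) := by decide
  have hwxy : wt (x + y) = ((univ : Finset ι).filter fun i =>
      (x i = 1 ∧ ¬ y i = 1) ∨ (¬ x i = 1 ∧ y i = 1)).card := by
    rw [wt]; congr 1; apply Finset.filter_congr; intro i _
    simp only [Pi.add_apply]; rw [hne]; exact hadd _ _
  have e1 : (((univ : Finset ι).filter fun i => x i = 1).filter fun i => y i = 1).card
      + (((univ : Finset ι).filter fun i => x i = 1).filter fun i => ¬ y i = 1).card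
      = ((univ : Finset ι).filter fun i => x i = 1).card :=
    Finset.card_filter_add_card_filter_not _
  have e2 : (((univ : Finset ι).filter fun i => y i = 1).filter fun i => x i = 1).card
      + (((univ : Finset ι).filter fun i => y i = 1).filter fun i => ¬ x i = 1).card
      = ((univ : Finset ι).filter fun i => y i = 1).card :=
    Finset.card_filter_add_card_filter_not _
  simp only [Finset.filter_filter] at e1 e2
  have e3 : ((univ : Finset ι).filter fun i =>
      (x i = 1 ∧ ¬ y i = 1) ∨ (¬ x i = 1 ∧ y i = 1)).card
      = ((univ : Finset ι).filter fun i => x i = 1 ∧ ¬ y i = 1).card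
      + ((univ : Finset ι).filter fun i => ¬ x i = 1 ∧ y i = 1).card := by
    rw [Finset.filter_or]
    apply Finset.card_union_of_disjoint
    rw [Finset.disjoint_left]
    intro a ha hb
    have h1 := (Finset.mem_filter.mp ha).2
    have h2 := (Finset.mem_filter.mp hb).2
    exact h2.1 h1.1
  have e4 : ((univ : Finset ι).filter fun i => y i = 1 ∧ x i = 1).card
      = ((univ : Finset ι).filter fun i => x i = 1 ∧ y i = 1).card := by
    congr 1; apply Finset.filter_congr; intro i _; exact and_comm
  have e5 : ((univ : Finset ι).filter fun i => y i = 1 ∧ ¬ x i = 1).card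
      = ((univ : Finset ι).filter fun i => ¬ x i = 1 ∧ y i = 1).card := by
    congr 1; apply Finset.filter_congr; intro i _; exact and_comm
  rw [hwx, hwy, hwxy, e3]
  omega

lemma wt_add_mod4 (x y : ι → ZMod 2) :
    ∃ m, wt x + wt y = wt (x + y) + 2 * m ∧ (dotp x y = 0 ↔ m % 2 = 0) := by
  classical
  refine ⟨_, wt_add_card x y, ?_⟩
  rw [dotp_eq_card, ZMod.natCast_eq_zero_iff]
  omega

noncomputable def psiC (a : ZMod 2) : ℂ := if a = 0 then 1 else I

noncomputable def chiC (a : ZMod 2) : ℂ := if a = 0 then 1 else -1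

lemma chiC_add (a b : ZMod 2) : chiC (a + b) = chiC a * chiC b := by
  have h11 : (1 + 1 : ZMod 2) = 0 := by decide
  rcases zmod2_em a with h | h <;> rcases zmod2_em b with h' | h' <;>
    simp [chiC, h, h', h11]

lemma chiC_sum (t : Finset ι) (f : ι → ZMod 2) :
    chiC (∑ i ∈ t, f i) = ∏ i ∈ t, chiC (f i) := by
  classical
  induction t using Finset.cons_induction with
  | empty => simp [chiC]
  | cons a t ha ih => rw [Finset.sum_cons, Finset.prod_cons, chiC_add, ih]

lemma prod_psiC (x : ι → ZMod 2) : ∏ i, psiC (x i) = I ^ wt x := by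
  classical
  calc ∏ i, psiC (x i) = ∏ i, (if x i ≠ 0 then I else 1) := by
        refine Finset.prod_congr rfl fun i _ => ?_
        rcases zmod2_em (x i) with h | h <;> simp [psiC, h]
    _ = ∏ i ∈ univ.filter (fun i => x i ≠ 0), I := (Finset.prod_filter _ _).symm
    _ = I ^ wt x := by rw [Finset.prod_const, wt]

lemma I_pow_mod (m : ℕ) : I ^ m = I ^ (m % 4) := by
  conv_lhs => rw [← Nat.div_add_mod m 4]
  rw [pow_add, pow_mul, I_pow_four, one_pow, one_mul]

lemma one_add_I_sq : (1 + I) ^ 2 = 2 * I := by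
  have h : (1 + I) ^ 2 = 1 + 2 * I + I ^ 2 := by ring
  rw [h, I_sq]; ring

lemma sub_eq_add_pow4 (m : ℕ) : (1 - I) ^ (4 * m) = (1 + I) ^ (4 * m) := by
  have h1 : (1 - I) ^ 4 = -4 := by
    have h : (1 - I) ^ 4 = 1 - 4 * I + 6 * I ^ 2 - 4 * I ^ 3 + I ^ 4 := by ring
    rw [h, I_sq, I_pow_four, pow_succ, I_sq]; ring
  have h2 : (1 + I) ^ 4 = -4 := by
    have h : (1 + I) ^ 4 = 1 + 4 * I + 6 * I ^ 2 + 4 * I ^ 3 + I ^ 4 := by ring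
    rw [h, I_sq, I_pow_four, pow_succ, I_sq]; ring
  rw [pow_mul, pow_mul, h1, h2]

lemma innerSumChi [DecidableEq ι] (c : ι → ZMod 2) :
    ∑ x : ι → ZMod 2, I ^ wt x * chiC (dotp x c)
      = (1 + I) ^ (Fintype.card ι - wt c) * (1 - I) ^ wt c := by
  classical
  have step1 : ∀ x : ι → ZMod 2, I ^ wt x * chiC (dotp x c)
      = ∏ i, (psiC (x i) * chiC (x i * c i)) := by
    intro x
    rw [Finset.prod_mul_distrib, prod_psiC, dotp, chiC_sum]
  rw [Finset.sum_congr rfl fun x _ => step1 x]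
  rw [← Fintype.prod_sum fun i a => psiC a * chiC (a * c i)]
  have hsum : ∀ b : ZMod 2, (∑ a : ZMod 2, psiC a * chiC (a * b))
      = if b = 0 then 1 + I else 1 - I := by
    intro b
    rw [show (univ : Finset (ZMod 2)) = {0, 1} from by decide,
      Finset.sum_insert (by decide), Finset.sum_singleton]
    rcases zmod2_em b with h | h <;>
      simp [h, psiC, chiC] <;> ring
  rw [Finset.prod_congr rfl fun i _ => hsum (c i)]
  rw [Finset.prod_ite (fun _ => (1 + I)) (fun _ => (1 - I)), Finset.prod_const, Finset.prod_const]
  have hwt : (univ.filter fun i => ¬ c i = 0).card = wt c := by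
    rw [wt]
  have hcard : (univ.filter fun i => c i = 0).card + (univ.filter fun i => ¬ c i = 0).card
      = Fintype.card ι := by
    rw [Finset.card_filter_add_card_filter_not, Finset.card_univ]
  rw [hwt, show (univ.filter fun i => c i = 0).card = Fintype.card ι - wt c by omega]


lemma zmod2_add_self (a : ZMod 2) : a + a = 0 := by revert a; decide

lemma pi_add_self (v : ι → ZMod 2) : v + v = 0 :=
  funext fun i => zmod2_add_self (v i)

lemma orth_sum_eq_zero (C0 : Submodule (ZMod 2) (ι → ZMod 2)) (C0F : Finset (ι → ZMod 2))
    (hF : ∀ v, v ∈ C0F ↔ v ∈ C0) (x : ι → ZMod 2) (hx : x ∉ dualCode C0) :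
    ∑ c ∈ C0F, chiC (dotp x c) = 0 := by
  obtain ⟨c', hc'0, hne⟩ : ∃ c', c' ∈ C0 ∧ dotp x c' ≠ 0 := by
    by_contra h
    push_neg at h
    exact hx h
  have hone : dotp x c' = 1 := (zmod2_em _).resolve_left hne
  have key : (∑ c ∈ C0F, chiC (dotp x (c + c'))) = ∑ c ∈ C0F, chiC (dotp x c) := by
    apply Finset.sum_equiv (Equiv.addRight c')
    · intro i
      simp only [Equiv.coe_addRight, hF]
      constructor
      · intro h; exact C0.add_mem h hc'0
      · intro h
        have h2 := C0.add_mem h hc'0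
        rwa [add_assoc, pi_add_self, add_zero] at h2
    · intro i _; rfl
  have hpt : ∀ c, chiC (dotp x (c + c')) = - chiC (dotp x c) := by
    intro c
    rw [dotp_add_right, hone, chiC_add]
    simp [chiC]
  rw [Finset.sum_congr rfl fun c _ => hpt c, Finset.sum_neg_distrib] at key
  have h2 : (2 : ℂ) * ∑ c ∈ C0F, chiC (dotp x c) = 0 := by
    rw [two_mul]
    nth_rewrite 1 [← key]
    ring
  exact (mul_eq_zero.mp h2).resolve_left two_ne_zero

/-- For `n ≡ 2 (mod 8)`, every shadow vector has weight
`≡ 1 (mod 4)`. -/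
theorem shadow_weight_mod_four (n : ℕ) (hn : n % 8 = 2)
    (C : Submodule (ZMod 2) (Fin n → ZMod 2))
    (hsd : C = dualCode C)
    (hse : ∃ c ∈ C, wt c % 4 = 2)
    (C0 : Submodule (ZMod 2) (Fin n → ZMod 2))
    (hC0 : (C0 : Set (Fin n → ZMod 2)) = {c | c ∈ C ∧ wt c % 4 = 0})
    (S : Set (Fin n → ZMod 2))
    (hS : S = (dualCode C0 : Set (Fin n → ZMod 2)) \ C)
    (s : Fin n → ZMod 2) (hs : s ∈ S) :
    wt s % 4 = 1 := by
  classical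
  obtain ⟨c2, hc2C, hc2w⟩ := hse
  have hmemC0 : ∀ c, c ∈ C0 ↔ c ∈ C ∧ wt c % 4 = 0 := fun c => by
    rw [← SetLike.mem_coe, hC0]; exact Iff.rfl
  have hC0C : ∀ c, c ∈ C0 → c ∈ C := fun c hc => ((hmemC0 c).1 hc).1
  have hCD : ∀ c ∈ C, ∀ d ∈ C, dotp c d = 0 := fun c hc d hd => (hsd ▸ hc) d hd
  have heven : ∀ c ∈ C, wt c % 2 = 0 := by
    intro c hc
    have h0 : dotp c c = 0 := hCD c hc c hc
    rw [dotp_self, ZMod.natCast_eq_zero_iff] at h0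
    omega
  have hCsub : ∀ c ∈ C, c ∈ dualCode C0 := fun c hc d hd => hCD c hc d (hC0C d hd)
  have hSmem : ∀ x ∈ S, x ∈ dualCode C0 ∧ x ∉ C := by
    rw [hS]; exact fun x hx => ⟨hx.1, hx.2⟩
  -- every shadow vector pairs to 1 with every weight-2-mod-4 codeword
  have hS2 : ∀ x ∈ S, ∀ c ∈ C, wt c % 4 = 2 → dotp x c = 1 := by
    intro x hx c hc hcw
    obtain ⟨hxD, hxC⟩ := hSmem x hx
    by_contra hne1
    have h0 : dotp x c = 0 := (zmod2_em _).resolve_right hne1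
    apply hxC
    rw [hsd]
    intro c' hc'
    have h2 := heven c' hc'
    have h4 : wt c' % 4 = 0 ∨ wt c' % 4 = 2 := by omega
    rcases h4 with h4 | h4
    · exact hxD c' ((hmemC0 c').2 ⟨hc', h4⟩)
    · have hcc : c' + c ∈ C := C.add_mem hc' hc
      obtain ⟨m, heq, hiff⟩ := wt_add_mod4 c' c
      have hm : m % 2 = 0 := hiff.1 (hCD c' hc' c hc)
      have h40 : wt (c' + c) % 4 = 0 := by omega
      have e1 : dotp x (c' + c) = 0 := hxD _ ((hmemC0 _).2 ⟨hcc, h40⟩)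
      rw [dotp_add_right, h0, add_zero] at e1
      exact e1
  -- all shadow weights are congruent mod 4
  have hSsame : ∀ x ∈ S, wt x % 4 = wt s % 4 := by
    intro x hx
    obtain ⟨hxD, hxC⟩ := hSmem x hx
    obtain ⟨hsD, hsC⟩ := hSmem s hs
    have hcC : x + s ∈ C := by
      have hD : x + s ∈ dualCode C0 := (dualCode C0).add_mem hxD hsD
      by_contra hnotC
      have hxsS : x + s ∈ S := by rw [hS]; exact ⟨hD, hnotC⟩
      have h1 := hS2 _ hxsS c2 hc2C hc2w
      have h2 := hS2 _ hx c2 hc2C hc2w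
      have h3 := hS2 _ hs c2 hc2C hc2w
      rw [show dotp (x + s) c2 = dotp c2 (x + s) from dotp_comm _ _, dotp_add_right,
        dotp_comm c2 x, dotp_comm c2 s, h2, h3] at h1
      exact absurd h1 (by decide)
    have hxeq : x = s + (x + s) := by
      funext i
      simp only [Pi.add_apply]
      have : ∀ a b : ZMod 2, a = b + (a + b) := by decide
      exact this _ _
    obtain ⟨m, heq, hiff⟩ := wt_add_mod4 s (x + s)
    rw [← hxeq] at heq
    have h2' := heven _ hcC
    have h4 : wt (x + s) % 4 = 0 ∨ wt (x + s) % 4 = 2 := by omega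
    rcases h4 with h4 | h4
    · have hm : m % 2 = 0 := hiff.1 (hsD _ ((hmemC0 _).2 ⟨hcC, h4⟩))
      omega
    · have hd1 : dotp s (x + s) = 1 := hS2 _ hs _ hcC h4
      have hm : m % 2 = 1 := by
        have := mt hiff.2 (by rw [hd1]; decide)
        omega
      omega
  -- Finsets
  set DF : Finset (Fin n → ZMod 2) :=
    Set.Finite.toFinset (Set.toFinite (dualCode C0 : Set (Fin n → ZMod 2))) with hDF
  set CF : Finset (Fin n → ZMod 2) :=
    Set.Finite.toFinset (Set.toFinite (C : Set (Fin n → ZMod 2))) with hCF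
  set C0F : Finset (Fin n → ZMod 2) :=
    Set.Finite.toFinset (Set.toFinite (C0 : Set (Fin n → ZMod 2))) with hC0F
  set SF : Finset (Fin n → ZMod 2) := Set.Finite.toFinset (Set.toFinite S) with hSF
  have hDFm : ∀ v, v ∈ DF ↔ v ∈ dualCode C0 := fun v => Set.Finite.mem_toFinset _
  have hCFm : ∀ v, v ∈ CF ↔ v ∈ C := fun v => Set.Finite.mem_toFinset _
  have hC0Fm : ∀ v, v ∈ C0F ↔ v ∈ C0 := fun v => Set.Finite.mem_toFinset _
  have hSFm : ∀ v, v ∈ SF ↔ v ∈ S := fun v => Set.Finite.mem_toFinset _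
  -- main Gauss sum identity
  have T1 : ∀ c ∈ C0F, (∑ x : Fin n → ZMod 2, I ^ wt x * chiC (dotp x c)) = (1 + I) ^ n := by
    intro c hcF
    have h4 : wt c % 4 = 0 := ((hmemC0 c).1 ((hC0Fm c).1 hcF)).2
    rw [innerSumChi]
    have hle : wt c ≤ n := by
      have := Finset.card_filter_le (univ : Finset (Fin n)) (fun i => c i ≠ 0)
      rw [wt]
      simpa using this
    obtain ⟨m, hm⟩ : ∃ m, wt c = 4 * m := ⟨wt c / 4, by omega⟩
    rw [hm, sub_eq_add_pow4, ← pow_add, Fintype.card_fin]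
    congr 1
    omega
  have T2 : (∑ c ∈ C0F, ∑ x : Fin n → ZMod 2, I ^ wt x * chiC (dotp x c))
      = (C0F.card : ℂ) * (1 + I) ^ n := by
    rw [Finset.sum_congr rfl T1, Finset.sum_const, nsmul_eq_mul]
  have T3 : (∑ c ∈ C0F, ∑ x : Fin n → ZMod 2, I ^ wt x * chiC (dotp x c))
      = (C0F.card : ℂ) * ∑ x ∈ DF, I ^ wt x := by
    rw [Finset.sum_comm]
    calc ∑ x : Fin n → ZMod 2, ∑ c ∈ C0F, I ^ wt x * chiC (dotp x c)
        = ∑ x : Fin n → ZMod 2, (if x ∈ DF then I ^ wt x * (C0F.card : ℂ) else 0) := by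
          refine Finset.sum_congr rfl fun x _ => ?_
          rw [← Finset.mul_sum]
          by_cases hx : x ∈ dualCode C0
          · rw [if_pos ((hDFm x).2 hx)]
            congr 1
            rw [Finset.sum_congr rfl fun c hc => by
              rw [show dotp x c = 0 from hx c ((hC0Fm c).1 hc)]]
            simp [chiC]
          · rw [if_neg (fun h => hx ((hDFm x).1 h)),
              orth_sum_eq_zero C0 C0F hC0Fm x hx, mul_zero]
      _ = ∑ x ∈ DF, I ^ wt x * (C0F.card : ℂ) := by
          rw [Finset.sum_ite_mem, Finset.univ_inter]
      _ = (C0F.card : ℂ) * ∑ x ∈ DF, I ^ wt x := by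
          rw [← Finset.sum_mul, mul_comm]
  have hcard0 : (C0F.card : ℂ) ≠ 0 := by
    have : (0 : Fin n → ZMod 2) ∈ C0F := (hC0Fm 0).2 C0.zero_mem
    have hpos : 0 < C0F.card := Finset.card_pos.mpr ⟨0, this⟩
    exact_mod_cast Nat.cast_ne_zero.mpr hpos.ne'
  have main : ∑ x ∈ DF, I ^ wt x = (1 + I) ^ n :=
    mul_left_cancel₀ hcard0 (T3.symm.trans T2)
  -- split the sum
  have hCFsub : CF ⊆ DF := fun x hx => (hDFm x).2 (hCsub x ((hCFm x).1 hx))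
  have hSFeq : SF = DF \ CF := by
    ext x
    simp only [Finset.mem_sdiff, hSFm, hDFm, hCFm, hS, Set.mem_diff, SetLike.mem_coe]
  have hsplit : (∑ x ∈ SF, I ^ wt x) + ∑ x ∈ CF, I ^ wt x = ∑ x ∈ DF, I ^ wt x := by
    rw [hSFeq]
    exact Finset.sum_sdiff hCFsub
  -- the sum over C vanishes
  have hCzero : ∑ x ∈ CF, I ^ wt x = 0 := by
    have key : (∑ x ∈ CF, I ^ wt (x + c2)) = ∑ x ∈ CF, I ^ wt x := by
      apply Finset.sum_equiv (Equiv.addRight c2)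
      · intro i
        simp only [Equiv.coe_addRight, hCFm]
        constructor
        · intro h; exact C.add_mem h hc2C
        · intro h
          have h2 := C.add_mem h hc2C
          rwa [add_assoc, pi_add_self, add_zero] at h2
      · intro i _; rfl
    have hneg : ∀ x ∈ CF, I ^ wt (x + c2) = - I ^ wt x := by
      intro x hx
      have hxC : x ∈ C := (hCFm x).1 hx
      obtain ⟨m, heq, hiff⟩ := wt_add_mod4 x c2
      have hm : m % 2 = 0 := hiff.1 (hCD x hxC c2 hc2C)
      have h24 : wt (x + c2) % 4 = (wt x + 2) % 4 := by omega
      calc I ^ wt (x + c2) = I ^ (wt (x + c2) % 4) := I_pow_mod _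
        _ = I ^ ((wt x + 2) % 4) := by rw [h24]
        _ = I ^ (wt x + 2) := (I_pow_mod _).symm
        _ = - I ^ wt x := by rw [pow_add, I_sq]; ring
    rw [Finset.sum_congr rfl hneg, Finset.sum_neg_distrib] at key
    have h2 : (2 : ℂ) * ∑ x ∈ CF, I ^ wt x = 0 := by
      rw [two_mul]
      nth_rewrite 1 [← key]
      ring
    exact (mul_eq_zero.mp h2).resolve_left two_ne_zero
  -- the sum over the shadow
  have hSsum : ∑ x ∈ SF, I ^ wt x = (SF.card : ℂ) * I ^ (wt s % 4) := by
    rw [Finset.sum_congr rfl fun x hx => by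
      rw [I_pow_mod, hSsame x ((hSFm x).1 hx)], Finset.sum_const, nsmul_eq_mul]
  have hsSF : s ∈ SF := (hSFm s).2 hs
  have hcardS : 1 ≤ SF.card := Finset.card_pos.mpr ⟨s, hsSF⟩
  obtain ⟨k, hk⟩ : ∃ k, n = 8 * k + 2 := ⟨n / 8, by omega⟩
  have hpow : (1 + I) ^ n = (2 : ℂ) ^ (4 * k + 1) * I := by
    rw [hk, show 8 * k + 2 = 2 * (4 * k + 1) by ring, pow_mul, one_add_I_sq, mul_pow]
    congr 1
    rw [show 4 * k + 1 = 4 * k + 1 from rfl, pow_add, pow_mul, I_pow_four, one_pow, one_mul,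
      pow_one]
  have E : (SF.card : ℂ) * I ^ (wt s % 4) = (2 : ℂ) ^ (4 * k + 1) * I := by
    rw [← hSsum, ← hpow, ← main, ← hsplit, hCzero, add_zero]
  have hwlt : wt s % 4 < 4 := Nat.mod_lt _ (by norm_num)
  have hre : ((2 : ℂ) ^ (4 * k + 1)).re = (2 : ℝ) ^ (4 * k + 1) := by
    rw [show (2 : ℂ) = ((2 : ℝ) : ℂ) by norm_num, ← Complex.ofReal_pow, Complex.ofReal_re]
  have hrpos : (0 : ℝ) < (2 : ℝ) ^ (4 * k + 1) := by positivity
  set w := wt s % 4 with hwdef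
  interval_cases w
  · rw [pow_zero, mul_one] at E
    have him := congrArg Complex.im E
    simp at him
    rw [hre] at him
    linarith
  · rfl
  · rw [I_sq] at E
    have him := congrArg Complex.im E
    simp at him
    rw [hre] at him
    linarith
  · rw [show (3 : ℕ) = 2 + 1 from rfl, pow_add, I_sq, pow_one] at E
    have him := congrArg Complex.im E
    simp at him
    rw [hre] at him
    have h1 : (0 : ℝ) < (SF.card : ℝ) := by exact_mod_cast hcardS
    linarith
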